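/- arXiv:2410.11742 — 2 statements merged into one kernel-verified Lean document; each statement's English description precedes it below -/
import Mathlib

section
/- The subtract function on ordered rows computes the relative complement: if r1 and r2 are lists of label-type pairs with strictly increasing labels, and every entry of r1 occurs in r2, then subtract r2 r1 is exactly the sublist of r2 consisting of those entries not occurring in r1, and it has strictly increasing labels. -/
def subtract {L T : Type*} [LinearOrder L] [DecidableEq T] :
    List (L × T) → List (L × T) → List (L × T)
  | [], _ => []
  | a :: r, [] => a :: r
  | (l, t) :: r, (l2, t2) :: r2 =>
      if l = l2 ∧ t = t2 then subtract r r2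
      else if l < l2 then (l, t) :: subtract r ((l2, t2) :: r2)
      else subtract ((l, t) :: r) r2
termination_by r2 r1 => r2.length + r1.length
decreasing_by all_goals (simp; try omega)

def RowOrdered {L T : Type*} [LinearOrder L] (r : List (L × T)) : Prop :=
  List.Pairwise (fun a b => a.1 < b.1) r

theorem subtract_aux {L T : Type*} [LinearOrder L]
    [DecidableEq L] [DecidableEq T]
    (r2 r1 : List (L × T)) :
    RowOrdered r1 → RowOrdered r2 → (∀ a ∈ r1, a ∈ r2) →
    subtract r2 r1 = r2.filter (fun a => decide (a ∉ r1)) := by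
  induction r2, r1 using subtract.induct with
  | case1 r1 =>
    intro h1 h2 hsub
    match r1, hsub with
    | [], _ => simp [subtract]
    | a :: r1, hsub => exact absurd (hsub a (by simp)) (by simp)
  | case2 a r =>
    intro _ _ _
    simp [subtract, List.filter_eq_self]
  | case3 l t r l2 t2 r2 heq ih =>
    intro h1 h2 hsub
    obtain ⟨rfl, rfl⟩ := heq
    rw [subtract, if_pos ⟨rfl, rfl⟩]
    have hlr : ∀ b ∈ r, l < b.1 := (List.pairwise_cons.mp h2).1
    have hlr1 : ∀ b ∈ r2, l < b.1 := (List.pairwise_cons.mp h1).1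
    have hmem : ∀ a ∈ r2, a ∈ r := by
      intro a ha
      rcases List.mem_cons.mp (hsub a (by simp [ha])) with h | h
      · exact absurd (h ▸ rfl : a.1 = l) (ne_of_gt (hlr1 a ha))
      · exact h
    rw [ih h1.tail h2.tail hmem]
    simp only [List.filter_cons]
    have : ((l, t) ∉ (l, t) :: r2) = False := by simp
    simp only [List.mem_cons, not_or, decide_eq_true_eq]
    rw [if_neg (by simp)]
    apply List.filter_congr
    intro a ha
    have hne : a ≠ (l, t) := by
      intro h
      exact absurd (h ▸ rfl : a.1 = l) (ne_of_gt (hlr a ha))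
    simp [hne]
  | case4 l t r l2 t2 r2 hne hlt ih =>
    intro h1 h2 hsub
    rw [subtract, if_neg hne, if_pos hlt]
    have hlr : ∀ b ∈ r, l < b.1 := (List.pairwise_cons.mp h2).1
    have hmem : ∀ a ∈ (l2, t2) :: r2, a ∈ r := by
      intro a ha
      have h12 : l2 ≤ a.1 := by
        rcases List.mem_cons.mp ha with h | h
        · exact le_of_eq (by rw [h])
        · exact le_of_lt ((List.pairwise_cons.mp h1).1 a h)
      rcases List.mem_cons.mp (hsub a ha) with h | h
      · exact absurd (h ▸ rfl : a.1 = l) (ne_of_gt (lt_of_lt_of_le hlt h12))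
      · exact h
    rw [ih h1 h2.tail hmem]
    rw [List.filter_cons]
    have hnotin : (l, t) ∉ (l2, t2) :: r2 := by
      intro h
      have := hmem _ h
      exact absurd rfl (ne_of_gt (hlr _ this) : ((l,t):L×T).1 ≠ l)
    rw [if_pos (decide_eq_true hnotin)]
  | case5 l t r l2 t2 r2 hne hnlt ih =>
    intro h1 h2 hsub
    exfalso
    rcases List.mem_cons.mp (hsub (l2, t2) (by simp)) with h | h
    · simp only [Prod.mk.injEq] at h
      exact hne ⟨h.1.symm, h.2.symm⟩
    · exact hnlt ((List.pairwise_cons.mp h2).1 _ h)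

/-- subtract computes the relative complement: if every entry of r1 occurs
in r2, then subtract r2 r1 is the sublist of r2 of entries not in r1, and
it has strictly increasing labels. -/
theorem subtract_eq_filter {L T : Type*} [LinearOrder L]
    [DecidableEq L] [DecidableEq T]
    (r1 r2 : List (L × T))
    (h1 : RowOrdered r1) (h2 : RowOrdered r2)
    (hsub : ∀ a ∈ r1, a ∈ r2) :
    subtract r2 r1 = r2.filter (fun a => decide (a ∉ r1)) ∧
      RowOrdered (subtract r2 r1) := by
  have heq := subtract_aux r2 r1 h1 h2 hsub
  refine ⟨heq, ?_⟩
  rw [heq]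
  exact h2.sublist List.filter_sublist
end

section
/- Combination determines the combined row up to equality: if rows r1 and r2 with strictly increasing labels combine (with some witnesses) to both r3 and r3', then r3 = r3'. -/
lemma rowOrdered_nodup {L T : Type*} [LinearOrder L] {r : List (L × T)}
    (h : RowOrdered r) : r.Nodup :=
  h.imp (fun hlt => by rintro rfl; exact lt_irrefl _ hlt)

lemma perm_of_witness {L T : Type*} [LinearOrder L]
    {r1 r2 r3 : List (L × T)}
    (h1 : RowOrdered r1) (h2 : RowOrdered r2) (h3 : RowOrdered r3)
    (p : Fin r1.length → Fin r3.length)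
    (q : Fin r2.length → Fin r3.length)
    (hp : ∀ k, r1.get k = r3.get (p k))
    (hq : ∀ k, r2.get k = r3.get (q k))
    (hdisj : Disjoint (Set.range p) (Set.range q))
    (hlen : r1.length + r2.length = r3.length) :
    (r1 ++ r2).Perm r3 := by
  have nd1 := rowOrdered_nodup h1
  have nd2 := rowOrdered_nodup h2
  have nd3 := rowOrdered_nodup h3
  have hpinj : Function.Injective p := by
    intro i j hij
    have : r1.get i = r1.get j := by rw [hp, hp, hij]
    exact (nd1.get_inj_iff).mp this
  have hqinj : Function.Injective q := by
    intro i j hij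
    have : r2.get i = r2.get j := by rw [hq, hq, hij]
    exact (nd2.get_inj_iff).mp this
  have hinj : Function.Injective (Sum.elim p q) := by
    rintro (i | i) (j | j) hij
    · exact congrArg Sum.inl (hpinj hij)
    · exact (Set.disjoint_left.mp hdisj ⟨i, hij⟩ ⟨j, rfl⟩).elim
    · exact (Set.disjoint_left.mp hdisj ⟨j, hij.symm⟩ ⟨i, rfl⟩).elim
    · exact congrArg Sum.inr (hqinj hij)
  have hsurj : Function.Surjective (Sum.elim p q) := by
    have hcard : Fintype.card (Fin r1.length ⊕ Fin r2.length) =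
        Fintype.card (Fin r3.length) := by simp [hlen]
    exact ((Fintype.bijective_iff_injective_and_card _).mpr ⟨hinj, hcard⟩).2
  have hdisj12 : List.Disjoint r1 r2 := by
    intro a ha1 ha2
    obtain ⟨i, rfl⟩ := List.mem_iff_get.mp ha1
    obtain ⟨j, hj⟩ := List.mem_iff_get.mp ha2
    have : r3.get (p i) = r3.get (q j) := by rw [← hp, ← hq, hj]
    have hpq : p i = q j := (nd3.get_inj_iff).mp this
    exact Set.disjoint_left.mp hdisj ⟨i, rfl⟩ ⟨j, hpq.symm⟩
  have ndapp : (r1 ++ r2).Nodup := List.nodup_append'.mpr ⟨nd1, nd2, hdisj12⟩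
  rw [List.perm_ext_iff_of_nodup ndapp nd3]
  intro a
  constructor
  · intro ha
    rcases List.mem_append.mp ha with ha | ha
    · obtain ⟨i, rfl⟩ := List.mem_iff_get.mp ha
      rw [hp]; exact List.get_mem _ _
    · obtain ⟨i, rfl⟩ := List.mem_iff_get.mp ha
      rw [hq]; exact List.get_mem _ _
  · intro ha
    obtain ⟨i, rfl⟩ := List.mem_iff_get.mp ha
    obtain ⟨j | j, rfl⟩ := hsurj i
    · exact List.mem_append.mpr (Or.inl (by
        simp only [Sum.elim_inl]; rw [← hp]; exact List.get_mem _ _))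
    · exact List.mem_append.mpr (Or.inr (by
        simp only [Sum.elim_inr]; rw [← hq]; exact List.get_mem _ _))

/-- Combination determines the combined row: if r1 and r2 combine to both
r3 and r3', then r3 = r3'. -/
theorem combination_unique {L T : Type*} [LinearOrder L]
    (r1 r2 r3 r3' : List (L × T))
    (h1 : RowOrdered r1) (h2 : RowOrdered r2)
    (h3 : RowOrdered r3) (h3' : RowOrdered r3')
    (p : Fin r1.length → Fin r3.length)
    (q : Fin r2.length → Fin r3.length)
    (hp : ∀ k, r1.get k = r3.get (p k))
    (hq : ∀ k, r2.get k = r3.get (q k))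
    (hdisj : Disjoint (Set.range p) (Set.range q))
    (hlen : r1.length + r2.length = r3.length)
    (p' : Fin r1.length → Fin r3'.length)
    (q' : Fin r2.length → Fin r3'.length)
    (hp' : ∀ k, r1.get k = r3'.get (p' k))
    (hq' : ∀ k, r2.get k = r3'.get (q' k))
    (hdisj' : Disjoint (Set.range p') (Set.range q'))
    (hlen' : r1.length + r2.length = r3'.length) :
    r3 = r3' := by
  have P := perm_of_witness h1 h2 h3 p q hp hq hdisj hlen
  have P' := perm_of_witness h1 h2 h3' p' q' hp' hq' hdisj' hlen'
  have : IsAntisymm (L × T) (fun a b => a.1 < b.1) :=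
    ⟨fun a b hab hba => absurd (hab.trans hba) (lt_irrefl _)⟩
  exact List.Perm.eq_of_pairwise (fun a b _ _ hab hba => absurd (hab.trans hba) (lt_irrefl _)) h3 h3' (P.symm.trans P')
end
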